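/- arXiv:2303.10628 — 2 statements merged into one kernel-verified Lean document; each statement's English description precedes it below -/
import Mathlib

section
/- Let P⁰ = (p⁰₁, p⁰₂, p⁰₃)ᵀ ∈ ℝ³, r_p > 0, and set m₀ = min{p⁰₁, p⁰₂, p⁰₃} and M₀ = max{p⁰₁, p⁰₂, p⁰₃}. Let P′, O′ ∈ ℝ³ be points each of whose coordinates lies in the interval [m₀ − √3·r_p, M₀ + √3·r_p] (as happens when their coordinates are obtained by shuffling the coordinates of points lying within Euclidean distance √3·r_p of P⁰). Let R be a 3×3 real orthogonal matrix, let ψ > 0, and define the cipher point C = ψ·R·(P′ − O′) + O′. Then ‖C − P⁰‖ ≤ (ψ + 1)·(6·r_p + √3·(M₀ − m₀)), where ‖·‖ is the Euclidean norm on ℝ³. -/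
lemma coord_norm_le (x : EuclideanSpace ℝ (Fin 3)) (a : ℝ) (ha : 0 ≤ a)
    (h : ∀ i, |x i| ≤ a) : ‖x‖ ≤ Real.sqrt 3 * a := by
  rw [EuclideanSpace.norm_eq]
  have h3 : Real.sqrt 3 * a = Real.sqrt (3 * a ^ 2) := by
    rw [Real.sqrt_mul (by norm_num), Real.sqrt_sq ha]
  rw [h3]
  apply Real.sqrt_le_sqrt
  have : ∀ i : Fin 3, ‖x i‖ ^ 2 ≤ a ^ 2 := by
    intro i
    rw [Real.norm_eq_abs, ← sq_abs a]
    exact pow_le_pow_left₀ (abs_nonneg _) ((h i).trans (le_abs_self a)) 2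
  calc ∑ i : Fin 3, ‖x i‖ ^ 2 ≤ ∑ _i : Fin 3, a ^ 2 :=
        Finset.sum_le_sum fun i _ => this i
    _ = 3 * a ^ 2 := by norm_num [Finset.sum_const]

open Matrix in
lemma orth_dot (R : Matrix (Fin 3) (Fin 3) ℝ) (hR : star R * R = 1) (w : Fin 3 → ℝ) :
    (R.mulVec w) ⬝ᵥ (R.mulVec w) = w ⬝ᵥ w := by
  have h1 : R.mulVec w = w ᵥ* Rᵀ := by
    rw [← Matrix.mulVec_transpose, Matrix.transpose_transpose]
  calc (R.mulVec w) ⬝ᵥ (R.mulVec w) = ((R.mulVec w) ᵥ* R) ⬝ᵥ w :=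
        Matrix.dotProduct_mulVec _ _ _
    _ = (w ᵥ* (Rᵀ * R)) ⬝ᵥ w := by rw [h1, Matrix.vecMul_vecMul]
    _ = w ⬝ᵥ w := by
        have : Rᵀ * R = 1 := hR
        rw [this, Matrix.vecMul_one]

/-- For the cipher point `C = ψ • R (P′ − O′) + O′`, where each coordinate of
`P′` and `O′` lies in `[m₀ − √3·r_p, M₀ + √3·r_p]` and `R` is orthogonal, one has
`‖C − P⁰‖ ≤ (ψ + 1)·(6·r_p + √3·(M₀ − m₀))`. -/
theorem cipher_bound
    (P0 : EuclideanSpace ℝ (Fin 3)) (rp : ℝ) (hrp : 0 < rp)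
    (m0 M0 : ℝ)
    (hm0 : m0 = min (P0 0) (min (P0 1) (P0 2)))
    (hM0 : M0 = max (P0 0) (max (P0 1) (P0 2)))
    (P' O' : EuclideanSpace ℝ (Fin 3))
    (hP' : ∀ i, P' i ∈ Set.Icc (m0 - Real.sqrt 3 * rp) (M0 + Real.sqrt 3 * rp))
    (hO' : ∀ i, O' i ∈ Set.Icc (m0 - Real.sqrt 3 * rp) (M0 + Real.sqrt 3 * rp))
    (R : Matrix (Fin 3) (Fin 3) ℝ) (hR : R ∈ Matrix.orthogonalGroup (Fin 3) ℝ)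
    (ψ : ℝ) (hψ : 0 < ψ)
    (C : EuclideanSpace ℝ (Fin 3))
    (hC : C = ψ • (EuclideanSpace.equiv (Fin 3) ℝ).symm (R.mulVec (P' - O')) + O') :
    ‖C - P0‖ ≤ (ψ + 1) * (6 * rp + Real.sqrt 3 * (M0 - m0)) := by
  have hs3 : (0:ℝ) ≤ Real.sqrt 3 := Real.sqrt_nonneg 3
  have hmM : m0 ≤ M0 := by
    rw [hm0, hM0]
    exact le_trans (min_le_left _ _) (le_max_left _ _)
  set L : ℝ := M0 - m0 + 2 * (Real.sqrt 3 * rp) with hL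
  have hL0 : 0 ≤ L := by nlinarith [mul_nonneg hs3 hrp.le]
  -- P0 coordinates lie in [m0, M0]
  have hP0 : ∀ i : Fin 3, m0 ≤ P0 i ∧ P0 i ≤ M0 := by
    intro i
    constructor
    · rw [hm0]
      fin_cases i
      · exact min_le_left _ _
      · exact (min_le_right _ _).trans (min_le_left _ _)
      · exact (min_le_right _ _).trans (min_le_right _ _)
    · rw [hM0]
      fin_cases i
      · exact le_max_left _ _
      · exact (le_max_left _ _).trans (le_max_right _ _)
      · exact (le_max_right _ _).trans (le_max_right _ _)
  -- bound on ‖P' - O'‖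
  have hPO : ‖P' - O'‖ ≤ Real.sqrt 3 * L := by
    apply coord_norm_le _ _ hL0
    intro i
    have h1 := hP' i
    have h2 := hO' i
    simp only [Set.mem_Icc] at h1 h2
    have : (P' - O') i = P' i - O' i := rfl
    rw [this, abs_le]
    constructor <;> [nlinarith [h1.1, h2.2]; nlinarith [h1.2, h2.1]]
  -- the rotated vector has the same norm
  set v : EuclideanSpace ℝ (Fin 3) :=
    (EuclideanSpace.equiv (Fin 3) ℝ).symm (R.mulVec (P' - O')) with hv
  have hvnorm : ‖v‖ = ‖P' - O'‖ := by
    have hR' : star R * R = 1 := (Matrix.mem_orthogonalGroup_iff' (Fin 3) ℝ).mp hR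
    have key := orth_dot R hR' (P' - O')
    rw [EuclideanSpace.norm_eq, EuclideanSpace.norm_eq]
    congr 1
    have hcoord : ∀ i : Fin 3, v i = (R.mulVec (P' - O')) i := fun i => rfl
    calc ∑ i : Fin 3, ‖v i‖ ^ 2 = ∑ i : Fin 3, (R.mulVec (P' - O')) i * (R.mulVec (P' - O')) i := by
          refine Finset.sum_congr rfl fun i _ => ?_
          rw [hcoord i, Real.norm_eq_abs, sq_abs, sq]
      _ = ∑ i : Fin 3, (P' - O') i * (P' - O') i := key
      _ = ∑ i : Fin 3, ‖(P' - O') i‖ ^ 2 := by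
          refine Finset.sum_congr rfl fun i _ => ?_
          rw [Real.norm_eq_abs, sq_abs, sq]
  -- bound on ‖O' - P0‖
  have hOP : ‖O' - P0‖ ≤ Real.sqrt 3 * L := by
    apply coord_norm_le _ _ hL0
    intro i
    have h2 := hO' i
    simp only [Set.mem_Icc] at h2
    have h3 := hP0 i
    have : (O' - P0) i = O' i - P0 i := rfl
    rw [this, abs_le]
    constructor <;> nlinarith [h2.1, h2.2, h3.1, h3.2, mul_nonneg hs3 hrp.le]
  -- assemble
  have hsplit : C - P0 = ψ • v + (O' - P0) := by
    rw [hC]; abel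
  have hnorm : ‖C - P0‖ ≤ ψ * ‖v‖ + ‖O' - P0‖ := by
    rw [hsplit]
    refine (norm_add_le _ _).trans ?_
    rw [norm_smul, Real.norm_eq_abs, abs_of_pos hψ]
  have hfin : Real.sqrt 3 * L = 6 * rp + Real.sqrt 3 * (M0 - m0) := by
    have : Real.sqrt 3 * Real.sqrt 3 = 3 := Real.mul_self_sqrt (by norm_num)
    rw [hL]; nlinarith [this]
  calc ‖C - P0‖ ≤ ψ * ‖v‖ + ‖O' - P0‖ := hnorm
    _ ≤ ψ * (Real.sqrt 3 * L) + Real.sqrt 3 * L := by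
        have h1 : ‖v‖ ≤ Real.sqrt 3 * L := by rw [hvnorm]; exact hPO
        have h2 := hψ.le
        gcongr
    _ = (ψ + 1) * (Real.sqrt 3 * L) := by ring
    _ = (ψ + 1) * (6 * rp + Real.sqrt 3 * (M0 - m0)) := by rw [hfin]
end

section
/- Let P⁰ = (p⁰₁, p⁰₂, p⁰₃)ᵀ ∈ ℝ³, r_p > 0, and set m₀ = min{p⁰₁, p⁰₂, p⁰₃} and M₀ = max{p⁰₁, p⁰₂, p⁰₃}. Let P′, O′ ∈ ℝ³ be points each of whose coordinates lies in the interval [m₀ − √3·r_p, M₀ + √3·r_p]. Let R be a 3×3 real orthogonal matrix, let 0 < ψ ≤ 1, and define the modified cipher point C = ψ·(R·(P′ − O′) + O′). Then ‖C − P⁰‖ ≤ ψ·(12·r_p + 3·√3·(M₀ − m₀)) + (1 − ψ)·‖P⁰‖. -/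
open Matrix

lemma aux_norm_coords (v : EuclideanSpace ℝ (Fin 3)) (b : ℝ) (hb : 0 ≤ b)
    (h : ∀ i, |v i| ≤ b) : ‖v‖ ≤ Real.sqrt 3 * b := by
  rw [EuclideanSpace.norm_eq]
  have hsum : ∑ i, ‖v i‖ ^ 2 ≤ 3 * b ^ 2 := by
    calc ∑ i : Fin 3, ‖v i‖ ^ 2 ≤ ∑ _i : Fin 3, b ^ 2 :=
          Finset.sum_le_sum fun i _ => by
            rw [Real.norm_eq_abs]
            exact pow_le_pow_left₀ (abs_nonneg _) (h i) 2
      _ = 3 * b ^ 2 := by simp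
  calc Real.sqrt (∑ i, ‖v i‖ ^ 2) ≤ Real.sqrt (3 * b ^ 2) := Real.sqrt_le_sqrt hsum
    _ = Real.sqrt 3 * b := by
        rw [Real.sqrt_mul (by norm_num), Real.sqrt_sq hb]

lemma aux_orth_norm (R : Matrix (Fin 3) (Fin 3) ℝ) (hR : R ∈ Matrix.orthogonalGroup (Fin 3) ℝ)
    (x : Fin 3 → ℝ) :
    ‖(EuclideanSpace.equiv (Fin 3) ℝ).symm (R.mulVec x)‖ =
      ‖(EuclideanSpace.equiv (Fin 3) ℝ).symm x‖ := by
  have h : R.transpose * R = 1 := (Matrix.mem_orthogonalGroup_iff' _ _).mp hR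
  have key : (R.mulVec x) ⬝ᵥ (R.mulVec x) = x ⬝ᵥ x := by
    rw [Matrix.dotProduct_mulVec, Matrix.vecMul_mulVec, h, Matrix.vecMul_one]
  rw [EuclideanSpace.norm_eq, EuclideanSpace.norm_eq]
  congr 1
  simpa [dotProduct, Real.norm_eq_abs, sq_abs, pow_two] using key

/-- For the modified cipher point `C = ψ • (R (P′ − O′) + O′)` with `0 < ψ ≤ 1`,
`‖C − P⁰‖ ≤ ψ·(12·r_p + 3·√3·(M₀ − m₀)) + (1 − ψ)·‖P⁰‖`. -/
theorem modified_cipher_bound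
    (P0 : EuclideanSpace ℝ (Fin 3)) (rp : ℝ) (hrp : 0 < rp)
    (m0 M0 : ℝ)
    (hm0 : m0 = min (P0 0) (min (P0 1) (P0 2)))
    (hM0 : M0 = max (P0 0) (max (P0 1) (P0 2)))
    (P' O' : EuclideanSpace ℝ (Fin 3))
    (hP' : ∀ i, P' i ∈ Set.Icc (m0 - Real.sqrt 3 * rp) (M0 + Real.sqrt 3 * rp))
    (hO' : ∀ i, O' i ∈ Set.Icc (m0 - Real.sqrt 3 * rp) (M0 + Real.sqrt 3 * rp))
    (R : Matrix (Fin 3) (Fin 3) ℝ) (hR : R ∈ Matrix.orthogonalGroup (Fin 3) ℝ)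
    (ψ : ℝ) (hψ0 : 0 < ψ) (hψ1 : ψ ≤ 1)
    (C : EuclideanSpace ℝ (Fin 3))
    (hC : C = ψ • ((EuclideanSpace.equiv (Fin 3) ℝ).symm (R.mulVec (P' - O')) + O')) :
    ‖C - P0‖ ≤ ψ * (12 * rp + 3 * Real.sqrt 3 * (M0 - m0)) + (1 - ψ) * ‖P0‖ := by
  set X : EuclideanSpace ℝ (Fin 3) :=
    (EuclideanSpace.equiv (Fin 3) ℝ).symm (R.mulVec (P' - O')) + O' with hX
  have hs3 : (0:ℝ) ≤ Real.sqrt 3 := Real.sqrt_nonneg 3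
  have hmM : m0 ≤ M0 := by
    rw [hm0, hM0]
    exact le_trans (min_le_left _ _) (le_max_left _ _)
  -- bound on ‖P' - O'‖
  have hPO : ‖P' - O'‖ ≤ Real.sqrt 3 * (M0 - m0 + 2 * Real.sqrt 3 * rp) := by
    apply aux_norm_coords
    · nlinarith [Real.sq_sqrt (by norm_num : (3:ℝ) ≥ 0)]
    · intro i
      have h1 := hP' i
      have h2 := hO' i
      simp only [Set.mem_Icc] at h1 h2
      have : (P' - O') i = P' i - O' i := rfl
      rw [this, abs_le]
      constructor <;> nlinarith
  -- bound on ‖O' - P0‖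
  have hOP : ‖O' - P0‖ ≤ Real.sqrt 3 * (M0 - m0 + Real.sqrt 3 * rp) := by
    apply aux_norm_coords
    · nlinarith [Real.sq_sqrt (by norm_num : (3:ℝ) ≥ 0)]
    · intro i
      have h2 := hO' i
      simp only [Set.mem_Icc] at h2
      have hPi : m0 ≤ P0 i ∧ P0 i ≤ M0 := by
        fin_cases i
        · exact ⟨hm0 ▸ min_le_left _ _, hM0 ▸ le_max_left _ _⟩
        · exact ⟨hm0 ▸ le_trans (min_le_right _ _) (min_le_left _ _),
            hM0 ▸ le_trans (le_max_left _ _) (le_max_right _ _)⟩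
        · exact ⟨hm0 ▸ le_trans (min_le_right _ _) (min_le_right _ _),
            hM0 ▸ le_trans (le_max_right _ _) (le_max_right _ _)⟩
      have : (O' - P0) i = O' i - P0 i := rfl
      rw [this, abs_le]
      constructor <;> nlinarith [hPi.1, hPi.2]
  -- bound on ‖X - P0‖
  have hRnorm : ‖(EuclideanSpace.equiv (Fin 3) ℝ).symm (R.mulVec (P' - O'))‖ = ‖P' - O'‖ := by
    rw [aux_orth_norm R hR]
    rfl
  have hXP : ‖X - P0‖ ≤ 12 * rp + 3 * Real.sqrt 3 * (M0 - m0) := by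
    have h3 : Real.sqrt 3 * Real.sqrt 3 = 3 := Real.mul_self_sqrt (by norm_num)
    calc ‖X - P0‖ = ‖(EuclideanSpace.equiv (Fin 3) ℝ).symm (R.mulVec (P' - O')) + (O' - P0)‖ := by
          rw [hX]; congr 1; abel
      _ ≤ ‖(EuclideanSpace.equiv (Fin 3) ℝ).symm (R.mulVec (P' - O'))‖ + ‖O' - P0‖ :=
          norm_add_le _ _
      _ = ‖P' - O'‖ + ‖O' - P0‖ := by rw [hRnorm]
      _ ≤ Real.sqrt 3 * (M0 - m0 + 2 * Real.sqrt 3 * rp)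
            + Real.sqrt 3 * (M0 - m0 + Real.sqrt 3 * rp) := add_le_add hPO hOP
      _ ≤ 12 * rp + 3 * Real.sqrt 3 * (M0 - m0) := by nlinarith
  -- final
  have hC' : C - P0 = ψ • (X - P0) + (ψ - 1) • P0 := by
    rw [hC, hX]
    module
  calc ‖C - P0‖ = ‖ψ • (X - P0) + (ψ - 1) • P0‖ := by rw [hC']
    _ ≤ ‖ψ • (X - P0)‖ + ‖(ψ - 1) • P0‖ := norm_add_le _ _
    _ = ψ * ‖X - P0‖ + (1 - ψ) * ‖P0‖ := by
        rw [norm_smul, norm_smul, Real.norm_eq_abs, Real.norm_eq_abs,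
          abs_of_pos hψ0, abs_of_nonpos (by linarith)]
        ring
    _ ≤ ψ * (12 * rp + 3 * Real.sqrt 3 * (M0 - m0)) + (1 - ψ) * ‖P0‖ := by
        have := mul_le_mul_of_nonneg_left hXP hψ0.le
        linarith
end
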